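/- arXiv:2504.12210 — 2 statements merged into one kernel-verified Lean document; each statement's English description precedes it below -/
import Mathlib

section
/- Suppose Ē is nonempty and every e ∈ Ē has capacity C_e > 0. For F ⊆ E with Γ_F ≠ ∅, set C_F := min_{e∈Γ_F} C_e. Then max_{e∈Ē} t_e/C_e = max_{F⊆E : Γ_F≠∅} t_F/C_F. (This is the combinatorial core of Lemma 2: the per-link-based completion-time formula max_e κ t_e/C_e coincides with the category-based formula max_F κ t_F/C_F.) -/
open Finset

/-- The category `Γ_F` of underlay links: the underlay links traversed by the paths of the
overlay links in `F` and by no others, i.e. `(⋂_{x∈F} p(x)) \ (⋃_{x∈E\F} p(x))`. -/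
def category {E Ebar : Type*} (p : E → Finset Ebar) (F : Finset E) : Set Ebar :=
  (⋂ x ∈ (F : Set E), (p x : Set Ebar)) \ (⋃ x ∈ ((F : Set E))ᶜ, (p x : Set Ebar))

/-- The per-link load `t_e = Σ_{x : e ∈ p(x)} a(x)`. -/
def linkLoad {E Ebar : Type*} [Fintype E] [DecidableEq Ebar] (p : E → Finset Ebar) (a : E → ℝ) (e : Ebar) : ℝ :=
  ∑ x ∈ Finset.univ.filter (fun x => e ∈ p x), a x

/-- The per-category load `t_F = Σ_{x∈F} a(x)`. -/
def catLoad {E : Type*} (a : E → ℝ) (F : Finset E) : ℝ := ∑ x ∈ F, a x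

/-!
Every underlay link `e` lies in exactly one category, namely `Γ_F` for `F` the set of overlay
links whose paths traverse `e`, and then `t_e = t_F`. Hence each category value `t_F / C_F`
is the link value at a link of `Γ_F` of minimal capacity, and conversely each link value
`t_e / C_e` is at most the value `t_F / C_F` of its category, as `t_e ≥ 0` and `C_F ≤ C_e`.
-/

section Category

variable {E Ebar : Type*} (p : E → Finset Ebar)

lemma mem_category_iff {F : Finset E} {e : Ebar} :
    e ∈ category p F ↔ (∀ x ∈ F, e ∈ p x) ∧ ∀ x ∉ F, e ∉ p x := by
  simp [category]

variable [Fintype E] [DecidableEq Ebar]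

def overlayLinksThrough (e : Ebar) : Finset E := univ.filter (fun x => e ∈ p x)

lemma mem_category_overlayLinksThrough (e : Ebar) :
    e ∈ category p (overlayLinksThrough p e) := by
  simp [mem_category_iff, overlayLinksThrough]

lemma overlayLinksThrough_eq_of_mem_category {F : Finset E} {e : Ebar}
    (he : e ∈ category p F) : overlayLinksThrough p e = F := by
  rw [mem_category_iff] at he
  ext x
  simpa [overlayLinksThrough] using ⟨fun hx => by_contra fun hxF => he.2 x hxF hx, he.1 x⟩

lemma linkLoad_eq_catLoad_of_mem_category (a : E → ℝ) {F : Finset E} {e : Ebar}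
    (he : e ∈ category p F) : linkLoad p a e = catLoad a F := by
  rw [← overlayLinksThrough_eq_of_mem_category p he]
  rfl

end Category

theorem max_per_link_eq_max_per_category_general
    {E Ebar : Type*} [Fintype E] [Fintype Ebar] [DecidableEq Ebar]
    (p : E → Finset Ebar) (a : E → ℝ) (ha : ∀ x, 0 ≤ a x)
    (C : Ebar → ℝ) (hC : ∀ e, 0 < C e) :
    sSup {r : ℝ | ∃ e : Ebar, r = linkLoad p a e / C e} =
      sSup {r : ℝ | ∃ F : Finset E, (category p F).Nonempty ∧
        r = catLoad a F / sInf (C '' category p F)} := by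
  have exists_capacity_eq {F : Finset E} (hF : (category p F).Nonempty) :
      ∃ e ∈ category p F, C e = sInf (C '' category p F) :=
    (hF.image C).csInf_mem (Set.toFinite _)
  apply csSup_eq_csSup_of_forall_exists_le
  · rintro _ ⟨e, rfl⟩
    set F := overlayLinksThrough p e
    have he : e ∈ category p F := mem_category_overlayLinksThrough p e
    obtain ⟨e₀, -, hCe₀⟩ := exists_capacity_eq ⟨e, he⟩
    refine ⟨_, ⟨F, ⟨e, he⟩, rfl⟩, ?_⟩
    rw [linkLoad_eq_catLoad_of_mem_category p a he]
    exact div_le_div_of_nonneg_left (sum_nonneg fun x _ => ha x) (hCe₀ ▸ hC e₀)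
      (csInf_le (Set.toFinite _).bddBelow (Set.mem_image_of_mem C he))
  · rintro _ ⟨F, hF, rfl⟩
    obtain ⟨e, he, hCe⟩ := exists_capacity_eq hF
    exact ⟨_, ⟨e, rfl⟩, by rw [linkLoad_eq_catLoad_of_mem_category p a he, hCe]⟩

/-- The per-link maximum `max_{e∈Ē} t_e/C_e` coincides with the category-based maximum
`max_{F : Γ_F ≠ ∅} t_F/C_F`, where `C_F = min_{e∈Γ_F} C_e`. -/
theorem max_per_link_eq_max_per_category
    {E Ebar : Type*} [Fintype E] [Fintype Ebar] [DecidableEq E] [DecidableEq Ebar] [Nonempty Ebar]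
    (p : E → Finset Ebar) (a : E → ℝ) (ha : ∀ x, 0 ≤ a x)
    (C : Ebar → ℝ) (hC : ∀ e, 0 < C e) :
    sSup {r : ℝ | ∃ e : Ebar, r = linkLoad p a e / C e} =
      sSup {r : ℝ | ∃ F : Finset E, (category p F).Nonempty ∧
        r = catLoad a F / sInf (C '' category p F)} :=
  max_per_link_eq_max_per_category_general p a ha C hC
end

section
/- Consider the Frank-Wolfe iterates of the FMMD algorithm: W^{(0)} := I, and for k = 0, 1, …, T−1, W^{(k+1)} := (k/(k+2))·W^{(k)} + (2/(k+2))·S^{(k+1)}, where each S^{(k+1)} is an arbitrary atom in S⁺. Then for any T ≥ 0, the number of index pairs (i,j) with 1 ≤ i < j ≤ m and W^{(T)}_{ij} ≠ 0 is at most T; i.e., the mixing matrix produced after T iterations activates at most T overlay links. -/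
open Matrix Finset

/-- The swapping matrix `S^{(i,j)}`: the permutation matrix of the transposition of `i` and `j`. -/
def swapMat (m : ℕ) (i j : Fin m) : Matrix (Fin m) (Fin m) ℝ :=
  Matrix.of fun k l =>
    if (k = i ∧ l = j) ∨ (k = j ∧ l = i) ∨ (k = l ∧ k ≠ i ∧ k ≠ j) then 1 else 0

/-- The atom set `S⁺`: the identity matrix together with all swapping matrices. -/
def Splus (m : ℕ) : Set (Matrix (Fin m) (Fin m) ℝ) :=
  {1} ∪ {A | ∃ i j : Fin m, i < j ∧ A = swapMat m i j}

/-- The index pairs `(i,j)` with `i < j`. -/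
def pairs (m : ℕ) : Finset (Fin m × Fin m) :=
  Finset.univ.filter fun p => p.1 < p.2

/-- The matrix `J = (1/m) 𝟙 𝟙ᵀ`, with all entries `1/m`. -/
noncomputable def Jmat (m : ℕ) : Matrix (Fin m) (Fin m) ℝ :=
  Matrix.of fun _ _ => 1 / (m : ℝ)

/-- The spectral norm (ℓ²→ℓ² operator norm) of a real matrix. -/
noncomputable def specNorm {m : ℕ} (A : Matrix (Fin m) (Fin m) ℝ) : ℝ :=
  ‖Matrix.toEuclideanCLM (𝕜 := ℝ) A‖

/-!
Each iterate is a linear combination of the previous iterate and one atom of `S⁺`, so its set of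
activated links lies in the union of theirs. The identity activates no link and a swapping matrix
exactly one, so every Frank–Wolfe step adds at most one link to those of `W⁽⁰⁾ = I`.
-/

/-- The activated overlay links of `A`. -/
def upperSupport {n α : Type*} [LT n] [Zero α] (A : Matrix n n α) : Set (n × n) :=
  {p | p.1 < p.2 ∧ A p.1 p.2 ≠ 0}

section upperSupport

variable {n α : Type*}

theorem upperSupport_one [Preorder n] [DecidableEq n] [Zero α] [One α] :
    upperSupport (1 : Matrix n n α) = ∅ :=
  Set.eq_empty_of_forall_notMem fun _ ⟨hlt, hne⟩ => hne (one_apply_ne hlt.ne)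

theorem upperSupport_add_subset [LT n] [AddZeroClass α] (A B : Matrix n n α) :
    upperSupport (A + B) ⊆ upperSupport A ∪ upperSupport B := by
  rintro p ⟨hlt, hne⟩
  by_contra! h
  simp only [upperSupport, Set.mem_union, Set.mem_ofPred_eq, not_or, not_and, not_not] at h
  exact hne (by rw [Matrix.add_apply, h.1 hlt, h.2 hlt, add_zero])

theorem upperSupport_smul_subset {R : Type*} [LT n] [Zero α] [SMulZeroClass R α]
    (c : R) (A : Matrix n n α) : upperSupport (c • A) ⊆ upperSupport A :=
  fun _ ⟨hlt, hne⟩ => ⟨hlt, fun h => hne (by rw [Matrix.smul_apply, h, smul_zero])⟩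

theorem ncard_upperSupport_linearCombination_le [LT n] [Finite n] [AddZeroClass α]
    {R : Type*} [SMulZeroClass R α] (a b : R) (A B : Matrix n n α) :
    (upperSupport (a • A + b • B)).ncard ≤ (upperSupport A).ncard + (upperSupport B).ncard :=
  calc (upperSupport (a • A + b • B)).ncard
      ≤ (upperSupport A ∪ upperSupport B).ncard :=
        Set.ncard_le_ncard ((upperSupport_add_subset _ _).trans
          (Set.union_subset_union (upperSupport_smul_subset a A) (upperSupport_smul_subset b B)))
    _ ≤ (upperSupport A).ncard + (upperSupport B).ncard := Set.ncard_union_le _ _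

end upperSupport

theorem upperSupport_swapMat_subset {m : ℕ} {i j : Fin m} (hij : i < j) :
    upperSupport (swapMat m i j) ⊆ {(i, j)} := by
  rintro ⟨k, l⟩ ⟨hkl, hne⟩
  simp only [swapMat, of_apply, ne_eq, ite_eq_right_iff, one_ne_zero, imp_false,
    not_not] at hne
  rcases hne with ⟨rfl, rfl⟩ | ⟨rfl, rfl⟩ | ⟨rfl, -⟩
  · rfl
  · exact absurd hkl hij.not_gt
  · exact absurd hkl (lt_irrefl k)

theorem ncard_upperSupport_le_one_of_mem_Splus {m : ℕ} {A : Matrix (Fin m) (Fin m) ℝ}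
    (hA : A ∈ Splus m) : (upperSupport A).ncard ≤ 1 := by
  rcases hA with rfl | ⟨i, j, hij, rfl⟩
  · simp [upperSupport_one]
  · exact (Set.ncard_le_ncard (upperSupport_swapMat_subset hij)).trans
      (Set.ncard_singleton _).le

theorem fmmd_activates_at_most_T_links_general (m T : ℕ)
    (S : ℕ → Matrix (Fin m) (Fin m) ℝ) (hS : ∀ k, S (k + 1) ∈ Splus m)
    (W : ℕ → Matrix (Fin m) (Fin m) ℝ) (hW0 : W 0 = 1)
    (hWk : ∀ k < T, W (k + 1)
      = ((k : ℝ) / ((k : ℝ) + 2)) • W k + (2 / ((k : ℝ) + 2)) • S (k + 1)) :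
    {p : Fin m × Fin m | p.1 < p.2 ∧ W T p.1 p.2 ≠ 0}.ncard ≤ T := by
  change (upperSupport (W T)).ncard ≤ T
  induction T with
  | zero => simp [hW0, upperSupport_one]
  | succ T ih =>
    have hprev := ih fun k hk => hWk k (Nat.lt_succ_of_lt hk)
    rw [hWk T T.lt_succ_self]
    linarith [ncard_upperSupport_linearCombination_le ((T : ℝ) / ((T : ℝ) + 2))
      (2 / ((T : ℝ) + 2)) (W T) (S (T + 1)), ncard_upperSupport_le_one_of_mem_Splus (hS T)]

/-- After `T` Frank-Wolfe iterations of FMMD (starting from `W⁽⁰⁾ = I`, each step taking a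
convex combination with an atom of `S⁺`), the resulting mixing matrix activates at most `T`
overlay links, i.e., at most `T` pairs `(i,j)` with `i < j` have a nonzero entry. -/
theorem fmmd_activates_at_most_T_links (m T : ℕ) (hm : 2 ≤ m)
    (S : ℕ → Matrix (Fin m) (Fin m) ℝ) (hS : ∀ k, S (k + 1) ∈ Splus m)
    (W : ℕ → Matrix (Fin m) (Fin m) ℝ) (hW0 : W 0 = 1)
    (hWk : ∀ k < T, W (k + 1)
      = ((k : ℝ) / ((k : ℝ) + 2)) • W k + (2 / ((k : ℝ) + 2)) • S (k + 1)) :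
    {p : Fin m × Fin m | p.1 < p.2 ∧ W T p.1 p.2 ≠ 0}.ncard ≤ T :=
  fmmd_activates_at_most_T_links_general m T S hS W hW0 hWk
end
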